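/- Let G be a P-group, B a symmetric subset, and suppose ε is an equivalence relation on B belonging to the trace on B of the left uniformity of G with at most 𝔠 equivalence classes. Then there exists a bounded function f : B → [0,1] which is uniformly continuous for the trace of the left uniformity and satisfies f(x) = f(y) ⇔ (x,y) ∈ ε. -/

import Mathlib

open Filter Set Topology Pointwise

universe u v

/-- A P-space: countable intersections of open sets are open. -/
def IsPSpace (X : Type*) [TopologicalSpace X] : Prop :=
  ∀ s : ℕ → Set X, (∀ n, IsOpen (s n)) → IsOpen (⋂ n, s n)

/-- A uniform P-space: countable intersections of entourages are entourages. -/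
def IsUniformPSpace (X : Type*) [UniformSpace X] : Prop :=
  ∀ s : ℕ → Set (X × X), (∀ n, s n ∈ uniformity X) → (⋂ n, s n) ∈ uniformity X

/-- The left uniformity of a topological group, as a filter on `G × G`. -/
def leftUnif (G : Type*) [Group G] [TopologicalSpace G] : Filter (G × G) :=
  Filter.comap (fun p : G × G => p.1⁻¹ * p.2) (nhds 1)

/-- The right uniformity of a topological group, as a filter on `G × G`. -/
def rightUnif (G : Type*) [Group G] [TopologicalSpace G] : Filter (G × G) :=
  Filter.comap (fun p : G × G => p.1 * p.2⁻¹) (nhds 1)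

/-- The two-sided uniformity (supremum of left and right uniformities). -/
def twoSidedUnif (G : Type*) [Group G] [TopologicalSpace G] : Filter (G × G) :=
  leftUnif G ⊓ rightUnif G

/-- `ε` belongs to the trace of the filter `μ` on the subset `B`. -/
def MemTrace {G : Type*} (μ : Filter (G × G)) (B : Set G) (ε : Set (G × G)) : Prop :=
  ∃ δ ∈ μ, δ ∩ B ×ˢ B = ε ∩ B ×ˢ B

/-- `f : B → ℝ` is uniformly continuous for the trace on `B` of the filter `μ` on `G × G`. -/
def UCOn {G : Type*} (μ : Filter (G × G)) (B : Set G) (f : B → ℝ) : Prop :=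
  ∀ e : ℝ, 0 < e → ∃ δ ∈ μ, ∀ x y : B, ((x : G), (y : G)) ∈ δ → |f x - f y| < e

/-- `ε` is an equivalence relation on the subset `B`. -/
def IsEquivOn {G : Type*} (B : Set G) (ε : Set (G × G)) : Prop :=
  (∀ x ∈ B, (x, x) ∈ ε) ∧ (∀ x ∈ B, ∀ y ∈ B, (x, y) ∈ ε → (y, x) ∈ ε) ∧
    (∀ x ∈ B, ∀ y ∈ B, ∀ z ∈ B, (x, y) ∈ ε → (y, z) ∈ ε → (x, z) ∈ ε)

/-- The relation `ε` has at most `c` equivalence classes on `B`. -/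
def ClassesLE {G : Type*} (B : Set G) (ε : Set (G × G)) (c : Cardinal) : Prop :=
  Cardinal.mk ↥(Set.range fun x : B => {y : B | ((x : G), (y : G)) ∈ ε}) ≤ c

/-- The symmetric subset `B` of a topological group `G` is functionally balanced. -/
def FunBalancedOn (G : Type*) [Group G] [TopologicalSpace G] (B : Set G) : Prop :=
  ∀ f : B → ℝ, (∃ M : ℝ, ∀ x : B, |f x| ≤ M) →
    UCOn (leftUnif G) B f → UCOn (rightUnif G) B f

/-- The symmetric subset `B` of a topological group `G` is strongly functionally balanced. -/
def StronglyFunBalancedOn (G : Type*) [Group G] [TopologicalSpace G] (B : Set G) : Prop :=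
  ∀ f : B → ℝ, UCOn (leftUnif G) B f → UCOn (rightUnif G) B f

/-- A non-archimedean topological group: open subgroups form a base at the identity. -/
def IsNonArchGroup (G : Type*) [Group G] [TopologicalSpace G] : Prop :=
  ∀ U ∈ nhds (1 : G), ∃ H : Subgroup G, IsOpen (H : Set G) ∧ (H : Set G) ⊆ U

/-- Words of length at most `n` in the free group. -/
def Bword (X : Type*) [DecidableEq X] (n : ℕ) : Set (FreeGroup X) :=
  {w : FreeGroup X | w.toWord.length ≤ n}

/-- The given group topology on `FreeGroup X` makes it the uniform free topological group
over the uniform space `X`: the canonical map is uniformly continuous (for the two-sided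
uniformity) and every uniformly continuous map to a topological group extends to a
continuous homomorphism. -/
def IsUniformFreeTopGroup (X : Type u) [UniformSpace X] [TopologicalSpace (FreeGroup X)]
    [IsTopologicalGroup (FreeGroup X)] : Prop :=
  Filter.Tendsto (Prod.map (FreeGroup.of : X → FreeGroup X) FreeGroup.of) (uniformity X)
      (twoSidedUnif (FreeGroup X)) ∧
    ∀ (G : Type u) [Group G] [TopologicalSpace G] [IsTopologicalGroup G] (φ : X → G),
      Filter.Tendsto (Prod.map φ φ) (uniformity X) (twoSidedUnif G) →
        Continuous ⇑(FreeGroup.lift φ)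

/-- The given group topology on `FreeGroup X` makes it the free non-archimedean balanced
topological group over the uniform space `X`. -/
def IsFreeNABalancedGroup (X : Type u) [UniformSpace X] [TopologicalSpace (FreeGroup X)]
    [IsTopologicalGroup (FreeGroup X)] : Prop :=
  IsNonArchGroup (FreeGroup X) ∧ leftUnif (FreeGroup X) = rightUnif (FreeGroup X) ∧
    Filter.Tendsto (Prod.map (FreeGroup.of : X → FreeGroup X) FreeGroup.of) (uniformity X)
      (twoSidedUnif (FreeGroup X)) ∧
    ∀ (G : Type u) [Group G] [TopologicalSpace G] [IsTopologicalGroup G] (φ : X → G),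
      IsNonArchGroup G → leftUnif G = rightUnif G →
      Filter.Tendsto (Prod.map φ φ) (uniformity X) (twoSidedUnif G) →
        Continuous ⇑(FreeGroup.lift φ)

/-! Since `ε` contains the trace on `B` of a left entourage, every function on `B` that is
constant on `ε`-classes is left uniformly continuous; sending the at most `𝔠` classes to
distinct points of `[0,1]` gives such a function that separates exactly the classes. -/

section EquivOn

variable {G : Type*} {B : Set G} {ε : Set (G × G)}

def equivClass (B : Set G) (ε : Set (G × G)) (x : B) :
    ↥(Set.range fun x : B => {y : B | ((x : G), (y : G)) ∈ ε}) :=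
  ⟨{y : B | ((x : G), (y : G)) ∈ ε}, Set.mem_range_self x⟩

theorem IsEquivOn.equivClass_eq_iff (h : IsEquivOn B ε) (x y : B) :
    equivClass B ε x = equivClass B ε y ↔ ((x : G), (y : G)) ∈ ε := by
  obtain ⟨hrefl, hsymm, htrans⟩ := h
  constructor
  · intro hxy
    have hx : x ∈ (equivClass B ε y : Set B) := hxy ▸ hrefl x x.2
    exact hsymm y y.2 x x.2 hx
  · intro hxy
    refine Subtype.ext (Set.ext fun z => ⟨fun hz => ?_, fun hz => ?_⟩)
    · exact htrans y y.2 x x.2 z z.2 (hsymm x x.2 y y.2 hxy) hz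
    · exact htrans x x.2 y y.2 z z.2 hxy hz

theorem MemTrace.exists_forall_mem {μ : Filter (G × G)} (h : MemTrace μ B ε) :
    ∃ δ ∈ μ, ∀ x y : B, ((x : G), (y : G)) ∈ δ → ((x : G), (y : G)) ∈ ε := by
  obtain ⟨δ, hδ, hδε⟩ := h
  refine ⟨δ, hδ, fun x y hxy => ?_⟩
  have hmem : ((x : G), (y : G)) ∈ δ ∩ B ×ˢ B := ⟨hxy, x.2, y.2⟩
  rw [hδε] at hmem
  exact hmem.1

theorem UCOn.of_forall_mem_eq {μ : Filter (G × G)} {f : B → ℝ} {δ : Set (G × G)} (hδ : δ ∈ μ)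
    (hf : ∀ x y : B, ((x : G), (y : G)) ∈ δ → f x = f y) : UCOn μ B f :=
  fun _ he => ⟨δ, hδ, fun x y hxy => by simpa [hf x y hxy] using he⟩

end EquivOn

theorem nonempty_embedding_Icc_of_mk_le_continuum {α : Type u}
    (h : Cardinal.mk α ≤ Cardinal.continuum) : Nonempty (α ↪ Set.Icc (0 : ℝ) 1) := by
  rw [← Cardinal.lift_mk_le', Cardinal.mk_Icc_real zero_lt_one, Cardinal.lift_continuum,
    Cardinal.lift_uzero]
  exact h

theorem exists_separating_function_general (G : Type*) [Group G] [TopologicalSpace G]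
    (B : Set G)
    (ε : Set (G × G)) (heq : IsEquivOn B ε)
    (htr : MemTrace (leftUnif G) B ε) (hcard : ClassesLE B ε Cardinal.continuum) :
    ∃ f : B → ℝ, (∀ x : B, f x ∈ Set.Icc (0 : ℝ) 1) ∧ UCOn (leftUnif G) B f ∧
      ∀ x y : B, (f x = f y ↔ ((x : G), (y : G)) ∈ ε) := by
  obtain ⟨code⟩ := nonempty_embedding_Icc_of_mk_le_continuum hcard
  obtain ⟨δ, hδ, hδε⟩ := htr.exists_forall_mem
  have hf_eq_iff (x y : B) :
      (code (equivClass B ε x) : ℝ) = code (equivClass B ε y) ↔ ((x : G), (y : G)) ∈ ε := by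
    rw [Subtype.coe_inj, code.injective.eq_iff, heq.equivClass_eq_iff]
  refine ⟨fun x => code (equivClass B ε x), fun x => (code _).2, ?_, hf_eq_iff⟩
  exact UCOn.of_forall_mem_eq hδ fun x y hxy => (hf_eq_iff x y).2 (hδε x y hxy)

/-- an equivalence relation in the left trace uniformity with at most 𝔠
classes is realized by a bounded `[0,1]`-valued left-uniformly continuous function. -/
theorem exists_separating_function (G : Type*) [Group G] [TopologicalSpace G]
    [IsTopologicalGroup G] (hP : IsPSpace G) (B : Set G) (hB : B⁻¹ = B)
    (ε : Set (G × G)) (hsub : ε ⊆ B ×ˢ B) (heq : IsEquivOn B ε)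
    (htr : MemTrace (leftUnif G) B ε) (hcard : ClassesLE B ε Cardinal.continuum) :
    ∃ f : B → ℝ, (∀ x : B, f x ∈ Set.Icc (0 : ℝ) 1) ∧ UCOn (leftUnif G) B f ∧
      ∀ x y : B, (f x = f y ↔ ((x : G), (y : G)) ∈ ε) :=
  exists_separating_function_general G B ε heq htr hcard
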